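/- arXiv:2105.13170 — 2 statements merged into one kernel-verified Lean document; each statement's English description precedes it below -/
import Mathlib

section
/- Let ℓ ≠ 2 and p be distinct primes, a an integer, and ψ a nontrivial additive character of period p (i.e. ψ(x) = e^{2πix/p}). Then the Kloosterman sum K₂(ψ, a) = Σ_{x₁x₂ ≡ a (mod p), x₁,x₂ ∈ (ℤ/pℤ)^×} ψ(x₁ + x₂) is not divisible by ℓ in the ring of integers ℤ[ζ_p] of the p-th cyclotomic field. -/
open NumberField Finset
open Polynomial

/-- For distinct primes `ℓ ≠ 2` and `p`, an integer `a`, and the additive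
character `ψ(x) = ζ_p^x` given by a primitive `p`-th root of unity `ζ` in the ring of
integers of the `p`-th cyclotomic field, the Kloosterman sum
`K₂(ψ, a) = ∑ x ∈ (ZMod p)ˣ, ζ^(a x + x⁻¹)` is not divisible by `ℓ`. -/
theorem kloosterman_not_div (ℓ : ℕ) (p : ℕ+) (hℓ : ℓ.Prime) [hp : Fact (p : ℕ).Prime]
    (hℓ2 : ℓ ≠ 2) (hℓp : ℓ ≠ (p : ℕ)) (a : ZMod p)
    (K : Type) [Field K] [CharZero K] [IsCyclotomicExtension {(p : ℕ)} ℚ K]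
    (ζ : 𝓞 K) (hζ : IsPrimitiveRoot ζ p) :
    ¬ ((ℓ : 𝓞 K) ∣
        ∑ x : (ZMod p)ˣ, ζ ^ ((a * (x : ZMod p) + ((x⁻¹ : (ZMod p)ˣ) : ZMod p)).val)) := by
  intro hdvd
  have hp2 : 2 ≤ (p : ℕ) := hp.out.two_le
  have hℓ3 : 3 ≤ ℓ := by have := hℓ.two_le; omega
  set g : (ZMod p)ˣ → ZMod p := fun x => a * (x : ZMod p) + ((x⁻¹ : (ZMod p)ˣ) : ZMod p)
    with hg
  set N : ZMod p → ℕ := fun c => (univ.filter fun x : (ZMod p)ˣ => g x = c).card with hN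
  -- each fiber has at most 2 elements
  have hN2 : ∀ c, N c ≤ 2 := by
    intro c
    set q : Polynomial (ZMod p) := C a * X ^ 2 - C c * X + 1 with hq
    have hq0 : q ≠ 0 := fun h => by
      have := congrArg (fun r => Polynomial.coeff r 0) h
      simp [hq, coeff_one] at this
    have hdeg : q.natDegree ≤ 2 := by rw [hq]; compute_degree
    have h1 : N c ≤ q.roots.toFinset.card := by
      refine Finset.card_le_card_of_injOn (fun x => (x : ZMod p)) ?_ ?_
      · intro x hx
        simp only [hN, hg, Finset.mem_coe, mem_filter, mem_univ, true_and] at hx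
        rw [Finset.mem_coe, Multiset.mem_toFinset, mem_roots hq0]
        have h1 : ((x⁻¹ : (ZMod p)ˣ) : ZMod p) * (x : ZMod p) = 1 := Units.inv_mul x
        simp only [IsRoot, hq, eval_add, eval_sub, eval_mul, eval_pow, eval_C, eval_X, eval_one]
        linear_combination (x : ZMod p) * hx - h1
      · intro x _ y _ h
        exact Units.ext h
    calc N c ≤ q.roots.toFinset.card := h1
      _ ≤ Multiset.card q.roots := q.roots.toFinset_card_le
      _ ≤ q.natDegree := q.card_roots'
      _ ≤ 2 := hdeg
  -- total count
  have hNsum : ∑ c : ZMod p, N c = (p : ℕ) - 1 := by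
    have := Finset.card_eq_sum_card_fiberwise
      (f := g) (s := (univ : Finset (ZMod p)ˣ)) (t := univ) (fun x _ => mem_univ _)
    rw [← this, Finset.card_univ, ZMod.card_units_eq_totient, Nat.totient_prime hp.out]
  -- rewrite the Kloosterman sum fiberwise
  have hstep1 : (∑ x : (ZMod p)ˣ, ζ ^ (g x).val)
      = ∑ c : ZMod p, (N c : ℤ) • ζ ^ c.val := by
    rw [← Finset.sum_fiberwise (univ : Finset (ZMod p)ˣ) g (fun x => ζ ^ (g x).val)]
    refine Finset.sum_congr rfl fun c _ => ?_
    have hc : ∀ x ∈ univ.filter (fun i : (ZMod p)ˣ => g i = c),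
        ζ ^ (g x).val = ζ ^ c.val := by
      intro x hx
      simp only [mem_filter] at hx
      rw [hx.2]
    rw [Finset.sum_congr rfl hc, Finset.sum_const, hN]
    simp [nsmul_eq_mul, zsmul_eq_mul]
  -- reindex over range p
  have hstep2 : (∑ c : ZMod p, (N c : ℤ) • ζ ^ c.val)
      = ∑ i ∈ range (p : ℕ), (N i : ℤ) • ζ ^ i := by
    refine Finset.sum_nbij' (fun c => c.val) (fun i => (i : ZMod p)) ?_ ?_ ?_ ?_ ?_
    · intro c _; exact mem_range.2 (ZMod.val_lt c)
    · intro i _; exact mem_univ _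
    · intro c _; exact ZMod.natCast_zmod_val c
    · intro i hi; exact ZMod.val_natCast_of_lt (mem_range.1 hi)
    · intro c _; rw [ZMod.natCast_zmod_val]
  -- geometric sum is zero
  have hgeom : ∑ i ∈ range (p : ℕ), ζ ^ i = 0 := hζ.geom_sum_eq_zero (by omega)
  -- coefficients
  set m : ℕ → ℤ := fun i => (N i : ℤ) - (N (-1) : ℤ) with hm
  have hmv : ∀ c : ZMod p, m c.val = (N c : ℤ) - (N (-1) : ℤ) := by
    intro c
    simp only [hm, ZMod.natCast_zmod_val]
  have hmlast : m ((p : ℕ) - 1) = 0 := by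
    have h : (((p : ℕ) - 1 : ℕ) : ZMod p) = -1 := by
      rw [Nat.cast_sub (by omega), ZMod.natCast_self, Nat.cast_one, zero_sub]
    simp only [hm, h, sub_self]
  have hstep3 : (∑ i ∈ range (p : ℕ), (N i : ℤ) • ζ ^ i)
      = ∑ i ∈ range ((p : ℕ) - 1), m i • ζ ^ i := by
    have h1 : ∑ i ∈ range (p : ℕ), (N i : ℤ) • ζ ^ i
        = ∑ i ∈ range (p : ℕ), m i • ζ ^ i + (N (-1) : ℤ) • ∑ i ∈ range (p : ℕ), ζ ^ i := by
      rw [smul_sum, ← Finset.sum_add_distrib]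
      refine Finset.sum_congr rfl fun i _ => ?_
      simp only [hm, ← add_smul]
      ring_nf
    rw [h1, hgeom, smul_zero, add_zero]
    have hps : (p : ℕ) - 1 + 1 = (p : ℕ) := by omega
    conv_lhs => rw [← hps]
    rw [Finset.sum_range_succ, hmlast, zero_smul, add_zero]
  -- basis argument
  have hζK : IsPrimitiveRoot (algebraMap (𝓞 K) K ζ) p :=
    hζ.map_of_injective RingOfIntegers.coe_injective
  set B := hζK.integralPowerBasis with hB
  have hdim : B.dim = (p : ℕ) - 1 := by
    rw [hB, hζK.integralPowerBasis_dim, Nat.totient_prime hp.out]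
  have hgen : B.gen = ζ := by
    rw [hB, hζK.integralPowerBasis_gen]
    rfl
  have hrepr : ∀ i : Fin B.dim, (ℓ : ℤ) ∣ m i := by
    obtain ⟨y, hy⟩ := hdvd
    have hkey : (∑ i : Fin B.dim, m i • B.basis i) = ((ℓ : ℤ)) • y := by
      have h3 : (∑ i : Fin B.dim, m i • B.basis i)
          = ∑ i ∈ range ((p : ℕ) - 1), m i • ζ ^ i := by
        rw [Finset.sum_congr rfl (fun i (_ : i ∈ univ) => by rw [B.basis_eq_pow, hgen]),
          ← hdim]
        exact Fin.sum_univ_eq_sum_range (fun j => m j • ζ ^ j) B.dim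
      rw [h3, ← hstep3, ← hstep2, ← hstep1, zsmul_eq_mul]
      push_cast
      exact hy
    intro i
    have h4 := congrArg (fun z => B.basis.repr z i) hkey
    simp only [map_smul, Finsupp.coe_smul, Pi.smul_apply, smul_eq_mul] at h4
    rw [Module.Basis.repr_sum_self] at h4
    exact ⟨B.basis.repr y i, h4⟩
  -- all fibers have equal size
  have hEq : ∀ c : ZMod p, N c = N (-1) := by
    intro c
    have hlt : c.val < (p : ℕ) := ZMod.val_lt c
    have hdvdm : (ℓ : ℤ) ∣ m c.val := by
      rcases Nat.lt_or_ge c.val ((p : ℕ) - 1) with h | h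
      · have h5 := hrepr ⟨c.val, by rw [hdim]; exact h⟩
        simpa using h5
      · have h6 : c.val = (p : ℕ) - 1 := by omega
        rw [h6, hmlast]
        exact dvd_zero _
    have hb1 := hN2 c
    have hb2 := hN2 (-1)
    rw [hmv c] at hdvdm
    have habs : |(N c : ℤ) - (N (-1) : ℤ)| < (ℓ : ℤ) := by
      have h7 : (3 : ℤ) ≤ (ℓ : ℤ) := by exact_mod_cast hℓ3
      rw [abs_lt]
      omega
    have h8 := Int.eq_zero_of_abs_lt_dvd hdvdm habs
    omega
  -- contradiction: p * N(-1) = p - 1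
  have hfinal : ∑ c : ZMod p, N c = (p : ℕ) * N (-1) := by
    rw [Finset.sum_congr rfl (fun c (_ : c ∈ univ) => hEq c), Finset.sum_const,
      Finset.card_univ, ZMod.card, smul_eq_mul]
  rw [hNsum] at hfinal
  have hpd : (p : ℕ) ∣ (p : ℕ) - 1 := ⟨N (-1), hfinal⟩
  have := Nat.le_of_dvd (by omega) hpd
  omega
end

section
/- Let M be a positive integer, p an odd prime with p² dividing M exactly (i.e. p² | M and p³ ∤ M). If β is an integer exactly divisible by p (p | β, p² ∤ β), then the number of square-classes modulo M contained in the set {β' mod M : p exactly divides β', β' ≡ β (mod M/p²)} is exactly 2. -/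
private lemma nonsq_mul_nonsq_inv {p : ℕ} [Fact p.Prime] (r c : ZMod p)
    (hr0 : r ≠ 0) (hc0 : c ≠ 0) (hr : ¬ IsSquare r) (hc : ¬ IsSquare c) :
    IsSquare (r * c⁻¹) := by
  have h1 : quadraticChar (ZMod p) r = -1 := quadraticChar_neg_one_iff_not_isSquare.mpr hr
  have hcinv : ¬ IsSquare c⁻¹ := by
    rintro ⟨x, hx⟩
    exact hc ⟨x⁻¹, by rw [← mul_inv, ← hx, inv_inv]⟩
  have h2' : quadraticChar (ZMod p) c⁻¹ = -1 := quadraticChar_neg_one_iff_not_isSquare.mpr hcinv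
  have h3 : quadraticChar (ZMod p) (r * c⁻¹) = 1 := by rw [map_mul, h1, h2']; ring
  exact (quadraticChar_one_iff_isSquare (mul_ne_zero hr0 (inv_ne_zero hc0))).mp h3

private lemma combine_mod {p N : ℕ} (hco : (p ^ 2).Coprime N) {x y : ℤ}
    (h1 : x ≡ y [ZMOD ((p:ℤ)^2)]) (h2 : x ≡ y [ZMOD (N:ℤ)]) :
    x ≡ y [ZMOD ((p:ℤ)^2 * N)] := by
  refine (Int.modEq_and_modEq_iff_modEq_mul ?_).mp ⟨h1, h2⟩
  simp only [Int.natAbs_pow, Int.natAbs_natCast]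
  exact hco

/-- Construct the unit `u` with prescribed residue mod `p` and `u ≡ 1 mod N`. -/
private lemma exists_unit {p N : ℕ} [Fact p.Prime] (hp : p.Prime) (hpN : ¬ p ∣ N)
    (v₀ : ZMod p) (hv₀ : v₀ ≠ 0) :
    ∃ u : ℤ, IsCoprime u ((p:ℤ)^2 * N) ∧ ((u : ZMod p) = v₀) ∧ (N:ℤ) ∣ u - 1 := by
  have hcopN : IsCoprime ((p:ℤ)) ((N:ℤ)) := by
    rw [Int.isCoprime_iff_gcd_eq_one, Int.gcd_natCast_natCast]
    exact (Nat.Prime.coprime_iff_not_dvd hp).mpr hpN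
  obtain ⟨s, t, hst⟩ := hcopN
  set u : ℤ := 1 + ((v₀.val : ℤ) - 1) * (t * N) with hu
  have hcast : ((u : ℤ) : ZMod p) = v₀ := by
    have h1 : ((t : ℤ) : ZMod p) * ((N : ℕ) : ZMod p) = 1 := by
      have := congrArg (fun z : ℤ => (z : ZMod p)) hst
      push_cast at this
      rwa [ZMod.natCast_self, mul_zero, zero_add] at this
    have hv : (((v₀.val : ℤ)) : ZMod p) = v₀ := by
      rw [Int.cast_natCast, ZMod.natCast_val, ZMod.cast_id]
    rw [hu]
    push_cast
    push_cast at h1 hv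
    rw [h1, hv]
    ring
  refine ⟨u, ?_, hcast, ⟨((v₀.val : ℤ) - 1) * t, by rw [hu]; ring⟩⟩
  have hup : IsCoprime u ((p:ℤ)) := by
    rw [isCoprime_comm, Prime.coprime_iff_not_dvd (Nat.prime_iff_prime_int.mp hp)]
    intro hdvd
    apply hv₀
    rw [← hcast, ZMod.intCast_zmod_eq_zero_iff_dvd]
    exact_mod_cast hdvd
  have huN : IsCoprime u ((N:ℤ)) := ⟨1, -(((v₀.val : ℤ) - 1) * t), by rw [hu]; ring⟩
  exact (hup.pow_right).mul_right huN

/-- Let `p` be an odd prime with `p²` exactly dividing `M`, and `β`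
exactly divisible by `p`. Then the set of residues `β'` modulo `M` with `β'` exactly
divisible by `p` and `β' ≡ β (mod M/p²)` splits into exactly two square-classes
modulo `M`. -/
theorem two_square_classes (M : ℕ) (hM : 0 < M) (p : ℕ) (hp : p.Prime) (hodd : p ≠ 2)
    (hp2 : p ^ 2 ∣ M) (hp3 : ¬ p ^ 3 ∣ M)
    (β : ℤ) (hβ : (p : ℤ) ∣ β) (hβ2 : ¬ ((p : ℤ) ^ 2 ∣ β)) :
    ∃ b₁ b₂ : ℤ,
      ((p : ℤ) ∣ b₁ ∧ ¬ ((p : ℤ) ^ 2 ∣ b₁) ∧ b₁ ≡ β [ZMOD ((M / p ^ 2 : ℕ) : ℤ)]) ∧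
      ((p : ℤ) ∣ b₂ ∧ ¬ ((p : ℤ) ^ 2 ∣ b₂) ∧ b₂ ≡ β [ZMOD ((M / p ^ 2 : ℕ) : ℤ)]) ∧
      ¬ (∃ u : ℤ, Int.gcd u (M : ℤ) = 1 ∧ b₁ ≡ u ^ 2 * b₂ [ZMOD (M : ℤ)]) ∧
      ∀ b : ℤ, ((p : ℤ) ∣ b ∧ ¬ ((p : ℤ) ^ 2 ∣ b) ∧ b ≡ β [ZMOD ((M / p ^ 2 : ℕ) : ℤ)]) →
        (∃ u : ℤ, Int.gcd u (M : ℤ) = 1 ∧ b ≡ u ^ 2 * b₁ [ZMOD (M : ℤ)]) ∨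
        (∃ u : ℤ, Int.gcd u (M : ℤ) = 1 ∧ b ≡ u ^ 2 * b₂ [ZMOD (M : ℤ)]) := by
  haveI : Fact p.Prime := ⟨hp⟩
  have hp0 : (p : ℤ) ≠ 0 := by exact_mod_cast hp.ne_zero
  obtain ⟨N, hMN⟩ := hp2
  have hN : M / p ^ 2 = N := by rw [hMN, Nat.mul_div_cancel_left _ (pow_pos hp.pos 2)]
  have hpN : ¬ p ∣ N := by
    intro h
    exact hp3 (by rw [hMN, pow_succ]; exact mul_dvd_mul_left _ h)
  have hMcast : (M : ℤ) = (p:ℤ)^2 * N := by exact_mod_cast congrArg (Nat.cast : ℕ → ℤ) hMN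
  obtain ⟨β₀, hβeq⟩ := hβ
  have hβ₀ : ¬ (p:ℤ) ∣ β₀ := by
    intro h
    exact hβ2 (by rw [hβeq, pow_two]; exact mul_dvd_mul_left _ h)
  have hβ₀p : ((β₀ : ZMod p)) ≠ 0 := by
    rw [Ne, ZMod.intCast_zmod_eq_zero_iff_dvd]; exact_mod_cast hβ₀
  -- nonsquare c
  have hchar : ringChar (ZMod p) ≠ 2 := by rw [ZMod.ringChar_zmod_n]; exact hodd
  obtain ⟨c, hc⟩ := FiniteField.exists_nonsquare (F := ZMod p) hchar
  have hc0 : c ≠ 0 := fun h => hc (h ▸ ⟨0, by simp⟩)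
  set c' : ℤ := (c.val : ℤ) with hc'
  have hcc : ((c' : ℤ) : ZMod p) = c := by
    rw [hc', Int.cast_natCast, ZMod.natCast_val, ZMod.cast_id]
  -- Bezout for p² and N
  have hcop2 : IsCoprime ((p:ℤ)^2) ((N:ℤ)) := by
    rw [Int.isCoprime_iff_gcd_eq_one]
    have : ((p:ℤ)^2) = ((p^2 : ℕ) : ℤ) := by push_cast; ring
    rw [this, Int.gcd_natCast_natCast]
    exact Nat.Coprime.pow_left 2 ((Nat.Prime.coprime_iff_not_dvd hp).mpr hpN)
  obtain ⟨s, t, hst⟩ := hcop2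
  set b₂ : ℤ := β * (s * (p:ℤ)^2) + (p : ℤ) * c' * β₀ * (t * N) with hb₂
  set b₀₂ : ℤ := β₀ * (s * (p:ℤ)^2) + c' * β₀ * (t * N) with hb₀₂
  have hb₂eq : b₂ = (p:ℤ) * b₀₂ := by rw [hb₂, hb₀₂, hβeq]; ring
  have htN : ((t : ℤ) : ZMod p) * ((N : ℕ) : ZMod p) = 1 := by
    have := congrArg (fun z : ℤ => (z : ZMod p)) hst
    push_cast at this
    rwa [ZMod.natCast_self, zero_pow (two_ne_zero), mul_zero, zero_add] at this
  have hb₀₂cast : ((b₀₂ : ℤ) : ZMod p) = c * (β₀ : ZMod p) := by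
    rw [hb₀₂]
    push_cast
    push_cast at htN hcc
    rw [ZMod.natCast_self, zero_pow (two_ne_zero)]
    calc (β₀ : ZMod p) * ((s:ZMod p) * 0) + (c':ℤ) * (β₀:ZMod p) * ((t:ZMod p) * (N:ZMod p))
        = ((c':ℤ) : ZMod p) * (β₀:ZMod p) * ((t:ZMod p) * (N:ZMod p)) := by push_cast; ring
      _ = c * (β₀ : ZMod p) := by rw [htN, hcc]; ring
  have hb₀₂p : ¬ (p:ℤ) ∣ b₀₂ := by
    intro h
    have : ((b₀₂ : ℤ) : ZMod p) = 0 := by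
      rw [ZMod.intCast_zmod_eq_zero_iff_dvd]; exact_mod_cast h
    rw [hb₀₂cast] at this
    exact (mul_ne_zero hc0 hβ₀p) this
  have hpb₂ : (p:ℤ) ∣ b₂ := ⟨b₀₂, hb₂eq⟩
  have hp2b₂ : ¬ ((p:ℤ)^2 ∣ b₂) := by
    intro h
    apply hb₀₂p
    rw [hb₂eq, pow_two] at h
    exact (mul_dvd_mul_iff_left hp0).mp h
  -- b₂ ≡ β mod N
  have hb₂N : b₂ ≡ β [ZMOD ((N:ℕ) : ℤ)] := by
    rw [Int.modEq_iff_dvd]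
    exact ⟨-(t * ((p:ℤ) * c' * β₀ - β)), by rw [hb₂]; linear_combination (-β) * hst⟩
  -- b₂ ≡ p c' β₀ mod p²
  have hb₂p2 : b₂ ≡ (p:ℤ) * c' * β₀ [ZMOD ((p:ℤ)^2)] := by
    rw [Int.modEq_iff_dvd]
    exact ⟨s * ((p:ℤ) * c' * β₀ - β), by rw [hb₂]; linear_combination (-(p:ℤ) * c' * β₀) * hst⟩
  refine ⟨β, b₂, ⟨⟨β₀, hβeq⟩, hβ2, by rw [hN]⟩, ⟨hpb₂, hp2b₂, by rw [hN]; exact hb₂N⟩, ?_, ?_⟩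
  · -- distinctness
    rintro ⟨u, hu, hcong⟩
    have hcong2 : β ≡ u^2 * b₂ [ZMOD ((p:ℤ)^2)] := by
      refine Int.ModEq.of_dvd ?_ hcong
      rw [hMcast]; exact Dvd.intro _ rfl
    have h2 : β ≡ u^2 * ((p:ℤ) * c' * β₀) [ZMOD ((p:ℤ)^2)] :=
      hcong2.trans ((Int.ModEq.refl (u^2)).mul hb₂p2)
    rw [Int.modEq_iff_dvd] at h2
    have h3 : (p:ℤ) ∣ u^2 * c' * β₀ - β₀ := by
      have h4 : u^2 * ((p:ℤ) * c' * β₀) - β = (p:ℤ) * (u^2 * c' * β₀ - β₀) := by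
        rw [hβeq]; ring
      rw [h4, pow_two] at h2
      exact (mul_dvd_mul_iff_left hp0).mp h2
    have h5 : ((u : ZMod p))^2 * c * (β₀ : ZMod p) - (β₀ : ZMod p) = 0 := by
      have := (ZMod.intCast_zmod_eq_zero_iff_dvd _ p).mpr (by exact_mod_cast h3)
      push_cast at this
      push_cast at hcc
      rw [hcc] at this
      linear_combination this
    have h6 : ((u : ZMod p))^2 * c = 1 := by
      have h5' : ((u : ZMod p))^2 * c * (β₀ : ZMod p) = 1 * (β₀ : ZMod p) := by
        rw [one_mul]; linear_combination h5
      exact mul_right_cancel₀ hβ₀p h5'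
    have hu0 : (u : ZMod p) ≠ 0 := by
      intro h
      rw [h] at h6; simp at h6
    exact hc ⟨(u : ZMod p)⁻¹, by field_simp at h6 ⊢; linear_combination h6⟩
  · -- coverage
    rintro b ⟨⟨b₀, hbeq⟩, hb2', hb3⟩
    rw [hN] at hb3
    have hb₀p : ¬ (p:ℤ) ∣ b₀ := by
      intro h
      exact hb2' (by rw [hbeq, pow_two]; exact mul_dvd_mul_left _ h)
    have hb₀pz : ((b₀ : ZMod p)) ≠ 0 := by
      rw [Ne, ZMod.intCast_zmod_eq_zero_iff_dvd]; exact_mod_cast hb₀p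
    set r : ZMod p := (b₀ : ZMod p) * (β₀ : ZMod p)⁻¹ with hr
    have hr0 : r ≠ 0 := mul_ne_zero hb₀pz (inv_ne_zero hβ₀p)
    have key : ∀ v₀ : ZMod p, v₀ ≠ 0 → ∀ bi : ℤ, bi ≡ β [ZMOD ((N:ℕ):ℤ)] →
        (∀ u : ℤ, (u : ZMod p) = v₀ → b ≡ u^2 * bi [ZMOD ((p:ℤ)^2)]) →
        ∃ u : ℤ, Int.gcd u (M : ℤ) = 1 ∧ b ≡ u ^ 2 * bi [ZMOD (M : ℤ)] := by
      intro v₀ hv₀ bi hbiN hbip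
      obtain ⟨u, hcop, hucast, huN⟩ := exists_unit hp hpN v₀ hv₀
      refine ⟨u, ?_, ?_⟩
      · rw [← Int.isCoprime_iff_gcd_eq_one, hMcast]; exact hcop
      · rw [hMcast]
        refine combine_mod (Nat.Coprime.pow_left 2 ((Nat.Prime.coprime_iff_not_dvd hp).mpr hpN))
          (hbip u hucast) ?_
        have hu1 : u ≡ 1 [ZMOD ((N:ℕ):ℤ)] := by
          rw [Int.modEq_iff_dvd]
          exact dvd_sub_comm.mp huN
        calc b ≡ β [ZMOD ((N:ℕ):ℤ)] := hb3
          _ ≡ bi [ZMOD ((N:ℕ):ℤ)] := hbiN.symm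
          _ ≡ u^2 * bi [ZMOD ((N:ℕ):ℤ)] := by
              have := (hu1.pow 2).mul (Int.ModEq.refl bi)
              simpa using this.symm
    by_cases hsq : IsSquare r
    · left
      obtain ⟨v₀, hv₀eq⟩ := hsq
      have hv₀ : v₀ ≠ 0 := by rintro rfl; simp at hv₀eq; exact hr0 hv₀eq
      refine key v₀ hv₀ β (Int.ModEq.refl β) ?_
      intro u hucast
      rw [Int.modEq_iff_dvd]
      have hgoal : (p:ℤ) ∣ u^2 * β₀ - b₀ := by
        rw [← ZMod.intCast_zmod_eq_zero_iff_dvd]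
        push_cast
        rw [hucast]
        have : (b₀ : ZMod p) = v₀^2 * (β₀ : ZMod p) := by
          have : r * (β₀ : ZMod p) = v₀ * v₀ * (β₀ : ZMod p) := by rw [← hv₀eq]
          rw [hr] at this
          field_simp at this
          rw [this]; ring
        rw [this]; ring
      have : u^2 * β - b = (p:ℤ) * (u^2 * β₀ - b₀) := by rw [hβeq, hbeq]; ring
      rw [this, pow_two]
      exact mul_dvd_mul_left _ hgoal
    · right
      have hsq2 : IsSquare (r * c⁻¹) := nonsq_mul_nonsq_inv r c hr0 hc0 hsq hc
      obtain ⟨v₀, hv₀eq⟩ := hsq2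
      have hv₀ : v₀ ≠ 0 := by
        rintro rfl
        simp at hv₀eq
        exact hv₀eq.elim hr0 hc0
      refine key v₀ hv₀ b₂ hb₂N ?_
      intro u hucast
      have hb₀sq : (b₀ : ZMod p) = v₀^2 * c * (β₀ : ZMod p) := by
        have h1 : r = v₀ * v₀ * c := by
          field_simp at hv₀eq
          rw [hv₀eq]; ring
        rw [hr] at h1
        field_simp at h1
        rw [h1]; ring
      have step : b ≡ u^2 * ((p:ℤ) * c' * β₀) [ZMOD ((p:ℤ)^2)] := by
        rw [Int.modEq_iff_dvd]
        have hgoal : (p:ℤ) ∣ u^2 * c' * β₀ - b₀ := by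
          rw [← ZMod.intCast_zmod_eq_zero_iff_dvd]
          push_cast
          push_cast at hcc
          rw [hucast, hcc, hb₀sq]
          ring
        have : u^2 * ((p:ℤ) * c' * β₀) - b = (p:ℤ) * (u^2 * c' * β₀ - b₀) := by
          rw [hbeq]; ring
        rw [this, pow_two]
        exact mul_dvd_mul_left _ hgoal
      exact step.trans ((Int.ModEq.refl (u^2)).mul hb₂p2.symm)
end
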